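/- Let s : Q → P be a folding of finite posets, M a P-module and N a Q-module with M = Fld_s(N). If N = N₁ ⊕ N̄₁ is an internal direct sum of submodules where both N₁ and N̄₁ are s-foldable, then Fld_s(N₁) and Fld_s(N̄₁) exist and M = Fld_s(N₁) ⊕ Fld_s(N̄₁). -/

import Mathlib

open Module

/-! # Preamble: persistence modules over finite posets -/

/-- A `P`-module: a functor from the poset `P` to finite-dimensional
`F`-vector spaces. -/
structure PModule (F : Type) [Field F] (P : Type) [PartialOrder P] where
  V : P → Type
  [addCommGroup : ∀ p, AddCommGroup (V p)]
  [module : ∀ p, Module F (V p)]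
  [fd : ∀ p, FiniteDimensional F (V p)]
  map : ∀ {p q : P}, p ≤ q → (V p →ₗ[F] V q)
  map_id : ∀ p : P, map (le_refl p) = LinearMap.id
  map_comp : ∀ {p q r : P} (hpq : p ≤ q) (hqr : q ≤ r),
    map (hpq.trans hqr) = (map hqr).comp (map hpq)

attribute [instance] PModule.addCommGroup PModule.module PModule.fd

variable {F : Type} [Field F] {P : Type} [PartialOrder P] {Q : Type} [PartialOrder Q]

/-- A submodule of a `P`-module: a choice of subspace at every point,
preserved by the structure maps. -/
structure PSubmodule {F : Type} [Field F] {P : Type} [PartialOrder P]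
    (M : PModule F P) where
  S : ∀ p : P, Submodule F (M.V p)
  map_le : ∀ {p q : P} (h : p ≤ q), (S p).map (M.map h) ≤ S q

/-- A submodule of a `P`-module, viewed as a `P`-module in its own right
(with the restricted structure maps). -/
def PSubmodule.toModule {M : PModule F P} (A : PSubmodule M) : PModule F P where
  V p := ↥(A.S p)
  map {p q} h := (M.map h).restrict (fun x hx => A.map_le h ⟨x, hx, rfl⟩)
  map_id p := by
    apply LinearMap.ext; intro x; apply Subtype.ext
    simp [LinearMap.restrict_apply, M.map_id]
  map_comp {p q r} hpq hqr := by
    apply LinearMap.ext; intro x; apply Subtype.ext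
    simp [LinearMap.restrict_apply, M.map_comp hpq hqr]

/-- The trivial (zero) submodule predicate. -/
def PSubmodule.IsTrivial {M : PModule F P} (A : PSubmodule M) : Prop :=
  ∀ p, A.S p = ⊥

/-- Indecomposability of a submodule of a `P`-module: it is nonzero and
admits no splitting into two nonzero parts. -/
def Indecomposable (M : PModule F P) (N : PSubmodule M) : Prop :=
  ¬ N.IsTrivial ∧
    ∀ A B : PSubmodule M,
      (∀ p, Disjoint (A.S p) (B.S p)) → (∀ p, A.S p ⊔ B.S p = N.S p) →
      A.IsTrivial ∨ B.IsTrivial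

/-- An internal direct-sum decomposition of a `P`-module into submodules. -/
structure Decomp {F : Type} [Field F] {P : Type} [PartialOrder P]
    (M : PModule F P) where
  ι : Type
  [fin : Fintype ι]
  N : ι → PSubmodule M
  indep : ∀ p, iSupIndep fun i => (N i).S p
  total : ∀ p, (⨆ i, (N i).S p) = ⊤

attribute [instance] Decomp.fin

/-- A decomposition into indecomposable submodules. -/
def Decomp.Indec {M : PModule F P} (D : Decomp M) : Prop :=
  ∀ i, Indecomposable M (D.N i)

/-! ## Hasse diagram, connectivity, intervals -/

/-- Hasse-connectivity of a subset of a poset: any two of its points are joined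
inside the subset by a sequence of immediate (covering) pairs. -/
def HasseConnected (I : Set P) : Prop :=
  ∀ (p : P) (hp : p ∈ I) (q : P) (hq : q ∈ I),
    Relation.ReflTransGen (fun a b : I => (a : P) ⋖ (b : P) ∨ (b : P) ⋖ (a : P))
      ⟨p, hp⟩ ⟨q, hq⟩

/-- A connected poset: any two points are joined by a sequence of
immediate (covering) pairs. -/
def IsConnectedPoset (P : Type) [PartialOrder P] : Prop :=
  ∀ p q : P, Relation.ReflTransGen (fun a b : P => a ⋖ b ∨ b ⋖ a) p q

/-- An interval of a poset: nonempty, convex and Hasse-connected. -/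
def IsIntervalSet (I : Set P) : Prop :=
  I.Nonempty ∧
  (∀ p q r : P, p ∈ I → q ∈ I → p ≤ r → r ≤ q → r ∈ I) ∧
  HasseConnected I

/-- The support of a submodule of a `P`-module. -/
def PSubmodule.supp {M : PModule F P} (A : PSubmodule M) : Set P :=
  {p | A.S p ≠ ⊥}

/-- A submodule is an interval submodule (isomorphic to an interval module):
its support is an interval, its spaces are one-dimensional on the support and
its internal structure maps are isomorphisms on the support. -/
def IsIntervalSub (M : PModule F P) (A : PSubmodule M) : Prop :=
  IsIntervalSet A.supp ∧
  (∀ p, p ∈ A.supp → finrank F (A.S p) = 1) ∧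
  (∀ (p q : P) (h : p ≤ q), p ∈ A.supp → q ∈ A.supp →
      (A.S p).map (M.map h) = A.S q)

/-- A full interval submodule: one-dimensional everywhere with structure maps
restricting to isomorphisms. -/
def IsFullIntervalSub (M : PModule F P) (A : PSubmodule M) : Prop :=
  (∀ p, finrank F (A.S p) = 1) ∧
  (∀ (p q : P) (h : p ≤ q), (A.S p).map (M.map h) = A.S q)

/-- A decomposition into interval submodules. -/
def Decomp.IsIntervalDecomp {M : PModule F P} (D : Decomp M) : Prop :=
  ∀ i, IsIntervalSub M (D.N i)

/-! ## Limits and colimits of `P`-modules -/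

/-- The space of global sections of `M`, realized as a submodule of the
product `∀ p, M.V p` (which for finite `P` is the direct sum `⊕_p M(p)`). -/
def PModule.limSub (M : PModule F P) : Submodule F (∀ p, M.V p) where
  carrier := {v | ∀ (p q : P) (h : p ≤ q), M.map h (v p) = v q}
  add_mem' := by
    intro a b ha hb p q h
    simp only [Pi.add_apply, map_add, ha p q h, hb p q h]
  zero_mem' := by intro p q h; simp
  smul_mem' := by
    intro c a ha p q h
    simp only [Pi.smul_apply, map_smul, ha p q h]

/-- The (concrete) limit of a `P`-module. -/
def PModule.limType (M : PModule F P) : Type := ↥M.limSub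

noncomputable instance (M : PModule F P) : AddCommGroup M.limType :=
  inferInstanceAs (AddCommGroup ↥M.limSub)

noncomputable instance (M : PModule F P) : Module F M.limType :=
  inferInstanceAs (Module F ↥M.limSub)

instance (M : PModule F P) [Fintype P] : FiniteDimensional F M.limType :=
  inferInstanceAs (FiniteDimensional F ↥M.limSub)

/-- The canonical projection from the concrete limit to `M(p)`. -/
noncomputable def PModule.limProj (M : PModule F P) (p : P) : M.limType →ₗ[F] M.V p :=
  (LinearMap.proj p).comp M.limSub.subtype

/-- The subspace of relations defining the colimit:
generated by the vectors `j_p(v) - j_q(M(p ≤ q) v)`. -/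
def PModule.colimRel (M : PModule F P) [DecidableEq P] :
    Submodule F (∀ p, M.V p) :=
  Submodule.span F
    {x | ∃ (p q : P) (h : p ≤ q) (v : M.V p),
      x = Pi.single p v - Pi.single q (M.map h v)}

/-- The (concrete) colimit of a `P`-module. -/
def PModule.colimType (M : PModule F P) [DecidableEq P] : Type :=
  (∀ p, M.V p) ⧸ M.colimRel

noncomputable instance (M : PModule F P) [DecidableEq P] :
    AddCommGroup M.colimType :=
  inferInstanceAs (AddCommGroup ((∀ p, M.V p) ⧸ M.colimRel))

noncomputable instance (M : PModule F P) [DecidableEq P] : Module F M.colimType :=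
  inferInstanceAs (Module F ((∀ p, M.V p) ⧸ M.colimRel))

instance (M : PModule F P) [Fintype P] [DecidableEq P] :
    FiniteDimensional F M.colimType :=
  inferInstanceAs (FiniteDimensional F ((∀ p, M.V p) ⧸ M.colimRel))

/-- The canonical map from `M(p)` to the concrete colimit. -/
noncomputable def PModule.colimInj (M : PModule F P) [DecidableEq P] (p : P) :
    M.V p →ₗ[F] M.colimType :=
  M.colimRel.mkQ.comp (LinearMap.single F M.V p)

/-- The limit-to-colimit map obtained by passing through `M(p)`. -/
noncomputable def PModule.psiAt (M : PModule F P) [DecidableEq P] (p : P) :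
    M.limType →ₗ[F] M.colimType :=
  (M.colimInj p).comp (M.limProj p)

/-- The generalized rank computed through the point `p`. -/
noncomputable def genRankAt (M : PModule F P) [Fintype P] [DecidableEq P]
    (p : P) : ℕ :=
  finrank F (LinearMap.range (M.psiAt p))

/-- The generalized rank of a `P`-module (for connected `P` this is
independent of the chosen point). -/
noncomputable def genRank (M : PModule F P) [Fintype P] [DecidableEq P]
    [Nonempty P] : ℕ :=
  genRankAt M (Classical.arbitrary P)

/-- A cone over a `P`-module. -/
def IsCone (M : PModule F P) {L : Type} [AddCommGroup L] [Module F L]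
    (π : ∀ p, L →ₗ[F] M.V p) : Prop :=
  ∀ (p q : P) (h : p ≤ q), (M.map h).comp (π p) = π q

/-- A limit cone (terminal cone) over a `P`-module, within the category of
finite-dimensional `F`-vector spaces. -/
def IsLimitCone (M : PModule F P) {L : Type} [AddCommGroup L] [Module F L]
    (π : ∀ p, L →ₗ[F] M.V p) : Prop :=
  IsCone M π ∧
  ∀ (L' : Type) [AddCommGroup L'] [Module F L'] [FiniteDimensional F L']
    (π' : ∀ p, L' →ₗ[F] M.V p), IsCone M π' →
      ∃! u : L' →ₗ[F] L, ∀ p, (π p).comp u = π' p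

/-- A cocone over a `P`-module. -/
def IsCocone (M : PModule F P) {C : Type} [AddCommGroup C] [Module F C]
    (i : ∀ p, M.V p →ₗ[F] C) : Prop :=
  ∀ (p q : P) (h : p ≤ q), (i q).comp (M.map h) = i p

/-- A colimit cocone (initial cocone) over a `P`-module, within the category
of finite-dimensional `F`-vector spaces. -/
def IsColimitCocone (M : PModule F P) {C : Type} [AddCommGroup C] [Module F C]
    (i : ∀ p, M.V p →ₗ[F] C) : Prop :=
  IsCocone M i ∧
  ∀ (C' : Type) [AddCommGroup C'] [Module F C'] [FiniteDimensional F C']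
    (i' : ∀ p, M.V p →ₗ[F] C'), IsCocone M i' →
      ∃! u : C →ₗ[F] C', ∀ p, u.comp (i p) = i' p

/-! ## Foldings -/

/-- A folding of a poset `Q` onto a poset `P`: an order-preserving surjection
which also surjects onto the Hasse diagram of `P`. -/
structure Folding (Q P : Type) [PartialOrder Q] [PartialOrder P] where
  toFun : Q → P
  surj : Function.Surjective toFun
  mono : ∀ {a b : Q}, a ≤ b → toFun a ≤ toFun b
  hasse : ∀ {u v : P}, u ⋖ v → ∃ a b : Q, a ≤ b ∧ toFun a = u ∧ toFun b = v

/-- Precomposition of a `P`-module with a folding `s : Q → P`; this is the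
induced `s`-unfolding `Fld_s⁻¹(M) = M ∘ s`. -/
def PModule.comp (M : PModule F P) (s : Folding Q P) : PModule F Q where
  V q := M.V (s.toFun q)
  map {a b} h := M.map (s.mono h)
  map_id q := M.map_id (s.toFun q)
  map_comp {a b c} hab hbc := M.map_comp (s.mono hab) (s.mono hbc)

/-- `A` is (equal to) a submodule of the `P`-module `M`. -/
def IsSubmoduleOf (A M : PModule F P) : Prop :=
  ∃ S : PSubmodule M, S.toModule = A

/-- `s`-foldability of a submodule: it assigns equal subspaces to any two
points with the same image under the folding. -/
def PSubmodule.Foldable (s : Folding Q P) {N : PModule F Q}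
    (A : PSubmodule N) : Prop :=
  ∀ q q' : Q, s.toFun q = s.toFun q' → HEq (A.S q) (A.S q')

/-! ## Isomorphisms, direct sums and quotients of `P`-modules -/

/-- An isomorphism of `P`-modules. -/
structure PIso (A B : PModule F P) where
  e : ∀ p, A.V p ≃ₗ[F] B.V p
  comm : ∀ {p q : P} (h : p ≤ q),
    (B.map h).comp (e p : A.V p →ₗ[F] B.V p) = (e q : A.V q →ₗ[F] B.V q).comp (A.map h)

/-- The external direct sum of two `P`-modules. -/
def PModule.dsum (A B : PModule F P) : PModule F P where
  V p := A.V p × B.V p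
  map {p q} h := (A.map h).prodMap (B.map h)
  map_id p := by
    show (A.map (le_refl p)).prodMap (B.map (le_refl p)) = LinearMap.id
    rw [A.map_id, B.map_id]; exact LinearMap.prodMap_id
  map_comp {p q r} hpq hqr := by
    show (A.map (hpq.trans hqr)).prodMap (B.map (hpq.trans hqr)) =
      ((A.map hqr).prodMap (B.map hqr)).comp ((A.map hpq).prodMap (B.map hpq))
    rw [A.map_comp hpq hqr, B.map_comp hpq hqr, LinearMap.prodMap_comp]

/-- The quotient of a `P`-module by a submodule. -/
def PModule.quot (M : PModule F P) (A : PSubmodule M) : PModule F P where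
  V p := M.V p ⧸ A.S p
  map {p q} h :=
    Submodule.mapQ (A.S p) (A.S q) (M.map h)
      (Submodule.map_le_iff_le_comap.mp (A.map_le h))
  map_id p := by
    apply Submodule.linearMap_qext
    apply LinearMap.ext; intro x
    simp [Submodule.mapQ_apply, M.map_id]
  map_comp {p q r} hpq hqr := by
    apply Submodule.linearMap_qext
    apply LinearMap.ext; intro x
    simp [Submodule.mapQ_apply, M.map_comp hpq hqr]

/-! ## Zigzag posets, limit modules, representatives -/

/-- A zigzag poset: a finite poset admitting a linear enumeration of its
points in which consecutive comparabilities are exactly the immediate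
(covering) pairs. -/
def IsZigzag (P : Type) [PartialOrder P] [Fintype P] : Prop :=
  ∃ e : Fin (Fintype.card P) ≃ P,
    (∀ (i : ℕ) (h1 : i < Fintype.card P) (h2 : i + 1 < Fintype.card P),
      e ⟨i, h1⟩ ⋖ e ⟨i + 1, h2⟩ ∨ e ⟨i + 1, h2⟩ ⋖ e ⟨i, h1⟩) ∧
    (∀ a b : Fin (Fintype.card P), e a ⋖ e b →
      (a : ℕ) + 1 = b ∨ (b : ℕ) + 1 = a)

/-- A limit module: a submodule that is a direct sum of interval submodules
over pairwise disjoint intervals, all of whose internal structure maps are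
surjective. -/
def IsLimitModule (M : PModule F P) (A : PSubmodule M) : Prop :=
  (∃ (ι : Type) (C : ι → PSubmodule M),
    (∀ i, IsIntervalSub M (C i)) ∧
    (Pairwise fun i j => Disjoint (C i).supp (C j).supp) ∧
    (∀ p, A.S p = ⨆ i, (C i).S p)) ∧
  (∀ (p q : P) (h : p ≤ q), (A.S p).map (M.map h) = A.S q)

/-- A (limit) representative of a submodule: a family of vectors spanning the
subspace at every point. -/
def IsRepr {M : PModule F P} (A : PSubmodule M) (b : ∀ p, M.V p) : Prop :=
  ∀ p, A.S p = Submodule.span F {b p}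

/-! ## s-complete, convertible, invertible -/

/-- Invertibility of the complement of the summand `D.N i`: there is an
`s`-foldable submodule `Q₀` with `N = Q₀ ⊕ D.N i`. -/
def Decomp.InvertibleCompl (s : Folding Q P) {N : PModule F Q}
    (D : Decomp N) (i : D.ι) : Prop :=
  ∃ Q₀ : PSubmodule N, Q₀.Foldable s ∧ ∀ q, IsCompl (Q₀.S q) ((D.N i).S q)

/-- `s`-completeness of the summand `D.N i`: it is a full interval module
which is `s`-foldable and has invertible complement. -/
def Decomp.SComplete (s : Folding Q P) {N : PModule F Q}
    (D : Decomp N) (i : D.ι) : Prop :=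
  IsFullIntervalSub N (D.N i) ∧ (D.N i).Foldable s ∧ D.InvertibleCompl s i

/-- The number of `s`-complete interval summands in the decomposition. -/
noncomputable def Decomp.kappa (s : Folding Q P) {N : PModule F Q}
    (D : Decomp N) : ℕ :=
  Nat.card {i : D.ι // D.SComplete s i}

/-- Convertibility of the full interval summand `D.N i`: it is `s`-foldable,
or it can be made `s`-foldable by adding a combination of representatives of
limit modules of the decomposition to its representative. -/
def Decomp.Convertible (s : Folding Q P) {N : PModule F Q}
    (D : Decomp N) (i : D.ι) : Prop :=
  IsFullIntervalSub N (D.N i) ∧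
  ((D.N i).Foldable s ∨
    ∃ (bI : ∀ q, N.V q) (α : D.ι → F) (b : D.ι → ∀ q, N.V q),
      IsRepr (D.N i) bI ∧
      (∀ j, α j ≠ 0 → j ≠ i ∧ IsLimitModule N (D.N j) ∧ IsRepr (D.N j) (b j)) ∧
      ∃ I' : PSubmodule N, IsFullIntervalSub N I' ∧ I'.Foldable s ∧
        IsRepr I' (fun q => bI q + ∑ j, α j • b j q))

/-- The number of summands of the decomposition that are convertible with
invertible complement. -/
noncomputable def Decomp.tau (s : Folding Q P) {N : PModule F Q}
    (D : Decomp N) : ℕ :=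
  Nat.card {i : D.ι // D.Convertible s i ∧ D.InvertibleCompl s i}

/-! ## Poset sizes, misc -/

/-- A packaged finite poset. -/
structure FinPoset where
  carrier : Type
  [po : PartialOrder carrier]
  [ft : Fintype carrier]

attribute [instance] FinPoset.po FinPoset.ft

/-- The number of immediate (covering) pairs of a finite poset. -/
noncomputable def coverCard (P : Type) [PartialOrder P] [Fintype P] : ℕ :=
  Nat.card {x : P × P // x.1 ⋖ x.2}

/-- The size of a finite poset: number of points plus number of immediate
pairs of its Hasse diagram. -/
noncomputable def posetSize (P : Type) [PartialOrder P] [Fintype P] : ℕ :=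
  Fintype.card P + coverCard P

open Classical in
/-- Update of a function at one argument (classical version). -/
noncomputable def updFun {α β : Type} (f : α → β) (a : α) (v : β) : α → β :=
  fun x => if x = a then v else f x


/-! Foldability makes the subspaces of a summand constant on the fibres of `s`, so they descend to
a family of subspaces of `M` indexed by `P`. Since `s` hits every Hasse pair of `P`, this family is
stable under the structure maps of `M` along covers, hence, `P` being finite, along all of `≤`.
Complementarity at `p` is then that of the two summands of `N` at any preimage of `p`. -/

attribute [ext] PSubmodule

namespace PSubmodule

variable {M : PModule F P}

def comp (B : PSubmodule M) (s : Folding Q P) : PSubmodule (M.comp s) where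
  S q := B.S (s.toFun q)
  map_le h := B.map_le (s.mono h)

theorem toModule_comp (B : PSubmodule M) (s : Folding Q P) :
    (B.comp s).toModule = B.toModule.comp s :=
  rfl

theorem map_le_of_covBy [LocallyFiniteOrder P] {S : ∀ p, Submodule F (M.V p)}
    (hS : ∀ ⦃u v : P⦄ (huv : u ⋖ v), (S u).map (M.map huv.le) ≤ S v) {p q : P} (h : p ≤ q) :
    (S p).map (M.map h) ≤ S q := by
  induction le_iff_reflTransGen_covBy.mp h with
  | refl => rw [M.map_id, Submodule.map_id]
  | tail hchain hbc ih =>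
    have hpb := le_iff_reflTransGen_covBy.mpr hchain
    rw [M.map_comp hpb hbc.le, Submodule.map_comp]
    exact (Submodule.map_mono (ih hpb)).trans (hS hbc)

def ofCovBy [LocallyFiniteOrder P] (S : ∀ p, Submodule F (M.V p))
    (hS : ∀ ⦃u v : P⦄ (huv : u ⋖ v), (S u).map (M.map huv.le) ≤ S v) : PSubmodule M where
  S := S
  map_le := map_le_of_covBy hS

variable {s : Folding Q P}

/-- The subspace of `M(p)` carried by `A` at a chosen preimage of `p`. -/
noncomputable def foldSpace (s : Folding Q P) (A : PSubmodule (M.comp s)) (p : P) :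
    Submodule F (M.V p) :=
  cast (congrArg (fun x => Submodule F (M.V x)) (s.surj p).choose_spec)
    (A.S (s.surj p).choose)

theorem foldSpace_toFun {A : PSubmodule (M.comp s)} (hA : A.Foldable s) (q : Q) :
    A.foldSpace s (s.toFun q) = A.S q :=
  eq_of_heq ((cast_heq _ _).trans (hA _ q (s.surj (s.toFun q)).choose_spec))

theorem foldSpace_covBy {A : PSubmodule (M.comp s)} (hA : A.Foldable s) {u v : P} (huv : u ⋖ v) :
    (A.foldSpace s u).map (M.map huv.le) ≤ A.foldSpace s v := by
  obtain ⟨a, b, hab, rfl, rfl⟩ := s.hasse huv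
  rw [foldSpace_toFun hA, foldSpace_toFun hA]
  exact A.map_le hab

/-- The folding `Fld_s(A)` of an `s`-foldable submodule of `M.comp s`. -/
noncomputable def fold [LocallyFiniteOrder P] (A : PSubmodule (M.comp s)) (hA : A.Foldable s) :
    PSubmodule M :=
  ofCovBy (A.foldSpace s) fun _ _ => foldSpace_covBy hA

theorem fold_S_toFun [LocallyFiniteOrder P] {A : PSubmodule (M.comp s)} (hA : A.Foldable s)
    (q : Q) : (A.fold hA).S (s.toFun q) = A.S q :=
  foldSpace_toFun hA q

theorem toModule_eq_fold_comp [LocallyFiniteOrder P] {A : PSubmodule (M.comp s)}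
    (hA : A.Foldable s) : A.toModule = (A.fold hA).toModule.comp s := by
  rw [← toModule_comp]
  congr
  ext1
  exact funext fun q => (fold_S_toFun hA q).symm

end PSubmodule

theorem fold_of_direct_sum_general
    {F : Type} [Field F] {Q P : Type} [PartialOrder Q] [PartialOrder P]
    [Fintype P] (s : Folding Q P)
    (M : PModule F P) (N : PModule F Q) (hN : N = M.comp s)
    (N₁ Nbar : PSubmodule N) (hdec : ∀ q, IsCompl (N₁.S q) (Nbar.S q))
    (h1 : N₁.Foldable s) (h2 : Nbar.Foldable s) :
    ∃ M₁ M₂ : PSubmodule M,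
      N₁.toModule = (M₁.toModule).comp s ∧
      Nbar.toModule = (M₂.toModule).comp s ∧
      ∀ p, IsCompl (M₁.S p) (M₂.S p) := by
  subst hN
  classical
  let _ : LocallyFiniteOrder P := Fintype.toLocallyFiniteOrder
  refine ⟨N₁.fold h1, Nbar.fold h2,
    PSubmodule.toModule_eq_fold_comp h1, PSubmodule.toModule_eq_fold_comp h2, ?_⟩
  intro p
  obtain ⟨q, rfl⟩ := s.surj p
  rw [PSubmodule.fold_S_toFun h1, PSubmodule.fold_S_toFun h2]
  exact hdec q

/-- If `N = N₁ ⊕ N̄₁` with both summands `s`-foldable, then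
`Fld_s(N₁)` and `Fld_s(N̄₁)` exist (as submodules of `M`) and
`M = Fld_s(N₁) ⊕ Fld_s(N̄₁)`. -/
theorem fold_of_direct_sum
    {F : Type} [Field F] {Q P : Type} [PartialOrder Q] [PartialOrder P]
    [Fintype Q] [Fintype P] (s : Folding Q P)
    (M : PModule F P) (N : PModule F Q) (hN : N = M.comp s)
    (N₁ Nbar : PSubmodule N) (hdec : ∀ q, IsCompl (N₁.S q) (Nbar.S q))
    (h1 : N₁.Foldable s) (h2 : Nbar.Foldable s) :
    ∃ M₁ M₂ : PSubmodule M,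
      N₁.toModule = (M₁.toModule).comp s ∧
      Nbar.toModule = (M₂.toModule).comp s ∧
      ∀ p, IsCompl (M₁.S p) (M₂.S p) :=
  fold_of_direct_sum_general s M N hN N₁ Nbar hdec h1 h2
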